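/- Let R be a Γ-graded ring, let e, f ∈ 𝒜 0 be idempotents (e*e = e, f*f = f) and let γ ∈ Γ. The following are equivalent: (i) there exist x ∈ 𝒜 (-γ) and y ∈ 𝒜 γ with x*y = e and y*x = f; (ii) there exist x ∈ 𝒜 (-γ) and y ∈ 𝒜 γ with e*x*f = x, f*y*e = y, x*y = e and y*x = f; (iii) there is an R-linear equivalence φ between the left ideals R·e and R·f (as submodules of R) such that for every δ ∈ Γ, φ maps (R·e) ∩ 𝒜 δ onto (R·f) ∩ 𝒜 (δ + -γ) (i.e., R·e is graded-isomorphic to the shifted left module (R·f)(γ⁻¹)). -/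
import Mathlib

private lemma mul_idem_of_mem_span' {R : Type*} [Ring R] {e r : R} (hee : e * e = e)
    (hr : r ∈ Submodule.span R {e}) : r * e = r := by
  obtain ⟨c, rfl⟩ := Submodule.mem_span_singleton.mp hr
  rw [smul_eq_mul, mul_assoc, hee]

private lemma idem_conj1 {R : Type*} [Ring R] {e x f : R} (hee : e * e = e) (hff : f * f = f) :
    e * (e * x * f) * f = e * x * f := by
  simp only [← mul_assoc]
  rw [hee, mul_assoc (e*x), hff]

private lemma idem_conj2 {R : Type*} [Ring R] {e f x y : R} (hee : e * e = e) (hff : f * f = f)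
    (hxy : x * y = e) (hyx : y * x = f) : (e * x * f) * (f * y * e) = e := by
  subst hxy hyx
  simp only [mul_assoc] at *
  simp only [hee]

private lemma idem_conj3 {R : Type*} [Ring R] {e f x y : R} (hee : e * e = e) (hff : f * f = f)
    (hxy : x * y = e) (hyx : y * x = f) : (f * y * e) * (e * x * f) = f := by
  subst hxy hyx
  simp only [mul_assoc] at *
  simp only [hff]

private def spanIso' {R : Type*} [Ring R] {e f x y : R}
    (hee : e * e = e) (hff : f * f = f) (hxy : x * y = e) (hyx : y * x = f)
    (hxf : x * f = x) (hye : y * e = y) :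
    (Submodule.span R {e} : Submodule R R) ≃ₗ[R] (Submodule.span R {f} : Submodule R R) where
  toFun r := ⟨r.1 * x, Submodule.mem_span_singleton.mpr
    ⟨r.1 * x, by rw [smul_eq_mul, mul_assoc, hxf]⟩⟩
  map_add' a b := Subtype.ext (add_mul _ _ _)
  map_smul' c a := Subtype.ext (by simp [smul_eq_mul, mul_assoc])
  invFun s := ⟨s.1 * y, Submodule.mem_span_singleton.mpr
    ⟨s.1 * y, by rw [smul_eq_mul, mul_assoc, hye]⟩⟩
  left_inv a := Subtype.ext (by
    show a.1 * x * y = a.1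
    rw [mul_assoc, hxy, mul_idem_of_mem_span' hee a.2])
  right_inv b := Subtype.ext (by
    show b.1 * y * x = b.1
    rw [mul_assoc, hyx, mul_idem_of_mem_span' hff b.2])

private lemma spanIso'_apply {R : Type*} [Ring R] {e f x y : R}
    (hee : e * e = e) (hff : f * f = f) (hxy : x * y = e) (hyx : y * x = f)
    (hxf : x * f = x) (hye : y * e = y) (r : (Submodule.span R {e} : Submodule R R)) :
    (spanIso' hee hff hxy hyx hxf hye r : R) = r.1 * x := rfl


/-- For a `Γ`-graded ring `R`, idempotents `e, f ∈ 𝒜 0` and `γ ∈ Γ`, the following are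
equivalent: (i) `x*y = e`, `y*x = f` for some `x ∈ 𝒜 (-γ)`, `y ∈ 𝒜 γ`; (ii) the same with
additionally `x ∈ e·R·f` and `y ∈ f·R·e`; (iii) the left ideal `R·e` is graded-isomorphic to
the `(-γ)`-shift of `R·f`, i.e. there is an `R`-linear equivalence `R·e ≃ R·f` carrying
`(R·e) ∩ 𝒜 δ` onto `(R·f) ∩ 𝒜 (δ + -γ)` for every `δ`. -/
theorem graded_equivalence_of_idempotents
    {Γ R : Type*} [AddGroup Γ] [DecidableEq Γ] [Ring R]
    (𝒜 : Γ → AddSubgroup R) [GradedRing 𝒜]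
    (e f : R) (he : e ∈ 𝒜 (0 : Γ)) (hf : f ∈ 𝒜 (0 : Γ))
    (hee : e * e = e) (hff : f * f = f) (γ : Γ) :
    ((∃ x ∈ 𝒜 (-γ), ∃ y ∈ 𝒜 γ, x * y = e ∧ y * x = f) ↔
      (∃ x ∈ 𝒜 (-γ), ∃ y ∈ 𝒜 γ,
        e * x * f = x ∧ f * y * e = y ∧ x * y = e ∧ y * x = f)) ∧
    ((∃ x ∈ 𝒜 (-γ), ∃ y ∈ 𝒜 γ, x * y = e ∧ y * x = f) ↔
      (∃ φ : (Submodule.span R {e} : Submodule R R) ≃ₗ[R] (Submodule.span R {f} : Submodule R R),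
        ∀ δ : Γ, ∀ x : (Submodule.span R {e} : Submodule R R),
          ((x : R) ∈ 𝒜 δ ↔ (φ x : R) ∈ 𝒜 (δ + -γ)))) := by
  have first : (∃ x ∈ 𝒜 (-γ), ∃ y ∈ 𝒜 γ, x * y = e ∧ y * x = f) ↔
      (∃ x ∈ 𝒜 (-γ), ∃ y ∈ 𝒜 γ,
        e * x * f = x ∧ f * y * e = y ∧ x * y = e ∧ y * x = f) := by
    constructor
    · rintro ⟨x, hx, y, hy, hxy, hyx⟩
      refine ⟨e * x * f, ?_, f * y * e, ?_, idem_conj1 hee hff, idem_conj1 hff hee,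
        idem_conj2 hee hff hxy hyx, idem_conj3 hee hff hxy hyx⟩
      · simpa using SetLike.mul_mem_graded (SetLike.mul_mem_graded he hx) hf
      · simpa using SetLike.mul_mem_graded (SetLike.mul_mem_graded hf hy) he
    · rintro ⟨x, hx, y, hy, -, -, hxy, hyx⟩
      exact ⟨x, hx, y, hy, hxy, hyx⟩
  refine ⟨first, ?_⟩
  constructor
  · intro h
    obtain ⟨x, hx, y, hy, hexf, hfye, hxy, hyx⟩ := first.mp h
    have hxf : x * f = x := by
      calc x * f = e * x * f * f := by rw [hexf]
        _ = e * x * f := by rw [mul_assoc (e*x), hff]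
        _ = x := hexf
    have hye : y * e = y := by
      calc y * e = f * y * e * e := by rw [hfye]
        _ = f * y * e := by rw [mul_assoc (f*y), hee]
        _ = y := hfye
    refine ⟨spanIso' hee hff hxy hyx hxf hye, fun δ r => ?_⟩
    rw [spanIso'_apply]
    constructor
    · intro hr
      exact SetLike.mul_mem_graded hr hx
    · intro hr
      have := SetLike.mul_mem_graded hr hy
      rw [mul_assoc, hxy, mul_idem_of_mem_span' hee r.2, neg_add_cancel_right] at this
      exact this
  · rintro ⟨φ, hφ⟩
    set E : (Submodule.span R {e} : Submodule R R) :=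
      ⟨e, Submodule.mem_span_singleton_self e⟩ with hE
    set F : (Submodule.span R {f} : Submodule R R) :=
      ⟨f, Submodule.mem_span_singleton_self f⟩ with hF
    refine ⟨(φ E : R), ?_, (φ.symm F : R), ?_, ?_, ?_⟩
    · have := (hφ 0 E).mp he
      simpa using this
    · have := (hφ γ (φ.symm F)).mpr (by
        rw [LinearEquiv.apply_symm_apply]
        simpa [add_neg_cancel] using hf)
      exact this
    · -- x * y = e
      have hxf : (φ E : R) * f = (φ E : R) := mul_idem_of_mem_span' hff (φ E).2
      have h1 : (φ E : R) • F = φ E := Subtype.ext (by simpa [smul_eq_mul] using hxf)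
      have h2 := map_smul φ.symm (φ E : R) F
      rw [h1, LinearEquiv.symm_apply_apply] at h2
      have := congrArg (Subtype.val) h2
      simpa [smul_eq_mul] using this.symm
    · -- y * x = f
      have hye : (φ.symm F : R) * e = (φ.symm F : R) := mul_idem_of_mem_span' hee (φ.symm F).2
      have h1 : (φ.symm F : R) • E = φ.symm F := Subtype.ext (by simpa [smul_eq_mul] using hye)
      have h2 := map_smul φ (φ.symm F : R) E
      rw [h1, LinearEquiv.apply_symm_apply] at h2
      have := congrArg (Subtype.val) h2
      simpa [smul_eq_mul] using this.symm
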